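/- Completeness of SC for partial epistemic models: if a formula φ of L_D is valid in every proper partial epistemic model with no empty world (i.e., M,w ⊨ φ for all such M and all worlds w), then φ is provable in the proof system SC. -/

import Mathlib

attribute [local instance] Classical.propDecidable

noncomputable section

/-- Formulas of the epistemic language `L_D` with distributed knowledge `D_B`
for nonempty groups `B` of agents. -/
inductive Form (A AP : Type) : Type
  | atom : AP → Form A AP
  | neg  : Form A AP → Form A AP
  | and  : Form A AP → Form A AP → Form A AP
  | dk   : (B : Finset A) → B.Nonempty → Form A AP → Form A AP

namespace Form

variable {A AP : Type}

/-- Disjunction, `φ ∨ ψ := ¬(¬φ ∧ ¬ψ)`. -/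
def or (φ ψ : Form A AP) : Form A AP := neg ((neg φ).and (neg ψ))

/-- Implication, `φ ⇒ ψ := ¬φ ∨ ψ`. -/
def imp (φ ψ : Form A AP) : Form A AP := (neg φ).or ψ

/-- `⊤ := p ∨ ¬p`. -/
def verum [Nonempty AP] : Form A AP :=
  (atom (Classical.arbitrary AP)).or (neg (atom (Classical.arbitrary AP)))

/-- `⊥ := ¬⊤`. -/
def falsum [Nonempty AP] : Form A AP := neg verum

/-- Individual knowledge `K_a φ := D_{{a}} φ`. -/
def K (a : A) (φ : Form A AP) : Form A AP := dk {a} (Finset.singleton_nonempty a) φ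

/-- `dead_a := K_a ⊥`. -/
def deadAgent [Nonempty AP] (a : A) : Form A AP := K a falsum

/-- `alive_a := ¬dead_a`. -/
def aliveAgent [Nonempty AP] (a : A) : Form A AP := (deadAgent a).neg

/-- `alive_B := ¬ D_B ⊥`. -/
def aliveGrp [Nonempty AP] (B : Finset A) (hB : B.Nonempty) : Form A AP := (dk B hB falsum).neg

/-- Finite conjunction. -/
def bigAnd [Nonempty AP] : List (Form A AP) → Form A AP
  | [] => verum
  | φ :: t => φ.and (bigAnd t)

/-- Finite disjunction. -/
def bigOr [Nonempty AP] : List (Form A AP) → Form A AP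
  | [] => falsum
  | φ :: t => φ.or (bigOr t)

/-- `dead_C := ⋀_{a ∈ C} dead_a`. -/
def deadGrp [Nonempty AP] (C : Finset A) : Form A AP := bigAnd (C.toList.map deadAgent)

end Form

/-- A propositional tautology: true under every assignment that interprets `¬` and `∧`
classically (atoms and `D_B`-formulas are treated as opaque). -/
def IsTaut {A AP : Type} (φ : Form A AP) : Prop :=
  ∀ v : Form A AP → Prop,
    (∀ ψ : Form A AP, v ψ.neg ↔ ¬ v ψ) →
    (∀ ψ χ : Form A AP, v (ψ.and χ) ↔ (v ψ ∧ v χ)) →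
    v φ

theorem unionNE {α : Type} [DecidableEq α] {s t : Finset α} (h : s.Nonempty) :
    (s ∪ t).Nonempty :=
  ⟨h.choose, Finset.mem_union_left _ h.choose_spec⟩

section ProofSystem

variable {A AP : Type} [Fintype A] [Nonempty AP]

/-- The proof system `SC` (axioms `K`, `B`, `4`, `Mono`, `Union`, `NE`, `P`, all
propositional tautologies, modus ponens and necessitation), extended by an arbitrary
additional set `Ax` of axioms. -/
inductive Prf (Ax : Form A AP → Prop) : Form A AP → Prop
  | taut {φ : Form A AP} : IsTaut φ → Prf Ax φ
  | mp {φ ψ : Form A AP} : Prf Ax (φ.imp ψ) → Prf Ax φ → Prf Ax ψ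
  | nec {φ : Form A AP} (B : Finset A) (hB : B.Nonempty) :
      Prf Ax φ → Prf Ax (Form.dk B hB φ)
  | axK {φ ψ : Form A AP} (B : Finset A) (hB : B.Nonempty) :
      Prf Ax ((Form.dk B hB (φ.imp ψ)).imp ((Form.dk B hB φ).imp (Form.dk B hB ψ)))
  | axB {φ : Form A AP} (B : Finset A) (hB : B.Nonempty) :
      Prf Ax (φ.imp (Form.dk B hB (Form.neg (Form.dk B hB φ.neg))))
  | ax4 {φ : Form A AP} (B : Finset A) (hB : B.Nonempty) :
      Prf Ax ((Form.dk B hB φ).imp (Form.dk B hB (Form.dk B hB φ)))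
  | axMono {φ : Form A AP} (B B' : Finset A) (hB : B.Nonempty) (hB' : B'.Nonempty)
      (hsub : B ⊆ B') : Prf Ax ((Form.dk B hB φ).imp (Form.dk B' hB' φ))
  | axUnion (B B' : Finset A) (hB : B.Nonempty) (hB' : B'.Nonempty) :
      Prf Ax (((Form.aliveGrp B hB).and (Form.aliveGrp B' hB')).imp
        (Form.aliveGrp (B ∪ B') (unionNE hB)))
  | axNE : Prf Ax (Form.bigOr ((Finset.univ : Finset A).toList.map Form.aliveAgent))
  | axP {φ : Form A AP} (B : Finset A) (hB : B.Nonempty) :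
      Prf Ax ((((Form.aliveGrp B hB).and (Form.deadGrp Bᶜ)).and φ).imp
        (Form.dk B hB ((Form.deadGrp Bᶜ).imp φ)))
  | extra {φ : Form A AP} : Ax φ → Prf Ax φ

/-- Provability in `SC` itself (no extra axioms). -/
def SC : Form A AP → Prop := Prf (fun _ => False)

/-- Instances of Axiom `Min : alive_B ∧ dead_{A∖B} ⇒ D_B dead_{A∖B}` for `B ⊊ A`. -/
def MinAx : Form A AP → Prop := fun φ =>
  ∃ (B : Finset A) (hB : B.Nonempty), B ≠ Finset.univ ∧
    φ = ((Form.aliveGrp B hB).and (Form.deadGrp Bᶜ)).imp (Form.dk B hB (Form.deadGrp Bᶜ))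

/-- Instances of Axiom `Max : alive_B ⇒ ¬ D_B ¬ dead_{A∖B}` for `B ⊊ A`. -/
def MaxAx : Form A AP → Prop := fun φ =>
  ∃ (B : Finset A) (hB : B.Nonempty), B ≠ Finset.univ ∧
    φ = (Form.aliveGrp B hB).imp (Form.neg (Form.dk B hB (Form.neg (Form.deadGrp Bᶜ))))

/-- Provability in `SCmin = SC + Min`. -/
def SCmin : Form A AP → Prop := Prf MinAx

/-- Provability in `SCmax = SC + Max`. -/
def SCmax : Form A AP → Prop := Prf MaxAx

/-- `Γ ⊢_P φ` : some finite conjunction of members of `Γ` provably implies `φ`. -/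
def ProvesFrom (P : Form A AP → Prop) (Γ : Set (Form A AP)) (φ : Form A AP) : Prop :=
  ∃ L : List (Form A AP), (∀ γ ∈ L, γ ∈ Γ) ∧ P ((Form.bigAnd L).imp φ)

/-- Consistency of a set of formulas with respect to a provability predicate `P`. -/
def ConsistentSet (P : Form A AP → Prop) (Γ : Set (Form A AP)) : Prop :=
  ¬ ProvesFrom P Γ Form.falsum

/-- Maximal consistent sets of formulas. -/
def MaxConsistent (P : Form A AP → Prop) (Γ : Set (Form A AP)) : Prop :=
  ConsistentSet P Γ ∧ ∀ φ ∉ Γ, ¬ ConsistentSet P (insert φ Γ)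

end ProofSystem

/-! ### Simplicial models -/

/-- The data of a (generalized) simplicial model: a set `S` of simplexes over the vertex
type `V`, a colouring `chi`, a set of worlds `Wld` and a labelling of worlds. -/
structure SimpData (A AP V : Type) where
  S : Set (Finset V)
  chi : V → A
  Wld : Set (Finset V)
  label : Finset V → Set AP

namespace SimpData

variable {A AP V : Type}

/-- A facet: a simplex maximal under inclusion. -/
def IsFacet (C : SimpData A AP V) (X : Finset V) : Prop :=
  X ∈ C.S ∧ ∀ Y ∈ C.S, X ⊆ Y → X = Y

/-- `⟨V,S,chi⟩` is a chromatic simplicial complex: simplexes are nonempty, every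
singleton is a simplex, `S` is downward closed, and every simplex has pairwise
distinct colours. -/
def IsComplex (C : SimpData A AP V) : Prop :=
  (∀ X ∈ C.S, X.Nonempty) ∧
  (∀ v : V, ({v} : Finset V) ∈ C.S) ∧
  (∀ X ∈ C.S, ∀ Y : Finset V, Y ⊆ X → Y.Nonempty → Y ∈ C.S) ∧
  (∀ X ∈ C.S, ∀ v ∈ X, ∀ w ∈ X, C.chi v = C.chi w → v = w)

/-- `C` is a generalized simplicial model: a chromatic simplicial complex together
with a set of worlds `Wld` with `Facets(C) ⊆ Wld ⊆ S`. -/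
def IsModel (C : SimpData A AP V) : Prop :=
  C.IsComplex ∧ (∀ X, C.IsFacet X → X ∈ C.Wld) ∧ C.Wld ⊆ C.S

/-- The model is minimal: the worlds are exactly the facets. -/
def Minimal (C : SimpData A AP V) : Prop := ∀ X, X ∈ C.Wld ↔ C.IsFacet X

/-- The model is maximal: every simplex is a world. -/
def Maximal (C : SimpData A AP V) : Prop := C.Wld = C.S

end SimpData

/-- Satisfaction on simplicial models: `C,w ⊨ D_B φ` iff `φ` holds at every world `w'`
with `B ⊆ chi(w ∩ w')`. -/
def SimpData.sat {A AP V : Type} (C : SimpData A AP V) : Finset V → Form A AP → Prop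
  | w, .atom p => p ∈ C.label w
  | w, .neg φ => ¬ C.sat w φ
  | w, .and φ ψ => C.sat w φ ∧ C.sat w ψ
  | w, .dk B _ φ => ∀ w' ∈ C.Wld, (↑B : Set A) ⊆ C.chi '' ((↑w : Set V) ∩ ↑w') → C.sat w' φ

/-! ### Partial epistemic models -/

/-- The data of a partial epistemic model: an accessibility relation for each agent and
a labelling of worlds. -/
structure PEData (A AP W : Type) where
  rel : A → W → W → Prop
  label : W → Set AP

namespace PEData

variable {A AP W : Type}

/-- Each relation is a partial equivalence relation (symmetric and transitive). -/
def IsPE (M : PEData A AP W) : Prop := ∀ a : A, Symmetric (M.rel a) ∧ Transitive (M.rel a)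

/-- The set of agents alive in a world. -/
def live (M : PEData A AP W) (w : W) : Set A := {a | M.rel a w w}

/-- Every world has at least one alive agent. -/
def NoEmptyWorld (M : PEData A AP W) : Prop := ∀ w : W, (M.live w).Nonempty

/-- Distinct worlds with the same alive agents are distinguished by some alive agent. -/
def Proper (M : PEData A AP W) : Prop :=
  ∀ w w' : W, w ≠ w' → M.live w = M.live w' → ∃ a ∈ M.live w, ¬ M.rel a w w'

/-- The model has no sub-world. -/
def Minimal (M : PEData A AP W) : Prop :=
  ∀ w w' : W, M.live w ⊂ M.live w' → ∃ a ∈ M.live w, ¬ M.rel a w w'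

/-- The model has all sub-worlds. -/
def Maximal (M : PEData A AP W) : Prop :=
  ∀ w' : W, ∀ B : Set A, B.Nonempty → B ⊂ M.live w' →
    ∃ w : W, M.live w = B ∧ ∀ a ∈ B, M.rel a w w'

end PEData

/-- Satisfaction on partial epistemic models: `M,w ⊨ D_B φ` iff `φ` holds at every `w'`
with `w ∼_a w'` for all `a ∈ B`. -/
def PEData.sat {A AP W : Type} (M : PEData A AP W) : W → Form A AP → Prop
  | w, .atom p => p ∈ M.label w
  | w, .neg φ => ¬ M.sat w φ
  | w, .and φ ψ => M.sat w φ ∧ M.sat w ψ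
  | w, .dk B _ φ => ∀ w' : W, (∀ a ∈ B, M.rel a w w') → M.sat w' φ

/-- The partial epistemic model `κ(C)` associated with a simplicial model `C`:
same worlds, `w ∼_a w'` iff `a ∈ chi(w ∩ w')`, same labelling. -/
def kappa {A AP V : Type} (C : SimpData A AP V) : PEData A AP {w : Finset V // w ∈ C.Wld} where
  rel := fun a w w' => a ∈ C.chi '' ((↑w.1 : Set V) ∩ ↑w'.1)
  label := fun w => C.label w.1

/-- Vertices of `σ(M)`: pairs `v^w_a = (a, [w]_a)` with `a` alive in `w`. -/
def sigmaVert {A AP W : Type} (M : PEData A AP W) : Type :=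
  {v : A × Set W // ∃ w : W, M.rel v.1 w w ∧ v.2 = {w' | M.rel v.1 w w'}}

/-- The world `X_w = { v^w_a | a ∈ live(w) }` of `σ(M)`. -/
def sigmaWorld {A AP W : Type} [Fintype A] (M : PEData A AP W) (w : W) :
    Finset (sigmaVert M) :=
  ((Finset.univ : Finset A).filter (fun a => M.rel a w w)).attach.image
    (fun a => ⟨(a.1, {w' | M.rel a.1 w w'}),
      ⟨w, by exact (Finset.mem_filter.mp a.2).2, rfl⟩⟩)

/-- The simplicial model `σ(M)` associated with a partial epistemic model `M`:
simplexes are the nonempty subsets of the sets `X_w`, worlds are the `X_w`,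
colouring is the first projection, and `ℓ(X_w) = L(w)`. -/
def sigmaModel {A AP W : Type} [Fintype A] (M : PEData A AP W) :
    SimpData A AP (sigmaVert M) where
  S := {X | X.Nonempty ∧ ∃ w : W, X ⊆ sigmaWorld M w}
  chi := fun v => v.1.1
  Wld := {X | ∃ w : W, X = sigmaWorld M w}
  label := fun X => {p | ∃ w : W, X = sigmaWorld M w ∧ p ∈ M.label w}

/-! ### Pseudo-models, the canonical model and unravelling -/

/-- The data of a pseudo-model: a relation `∼_B` for every group `B ⊆ A`. -/
structure PseudoData (A AP W : Type) where
  rel : Finset A → W → W → Prop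
  label : W → Set AP

/-- `M` is a pseudo-model: each `∼_B` is symmetric and transitive, the relations are
antitone (`∼_{B'} ⊆ ∼_B` for `B ⊆ B'`), and `w ∼_B w` together with `w ∼_{B'} w`
implies `w ∼_{B ∪ B'} w`. -/
def PseudoData.IsPseudo {A AP W : Type} [DecidableEq A] (M : PseudoData A AP W) : Prop :=
  (∀ B : Finset A, Symmetric (M.rel B)) ∧
  (∀ B : Finset A, Transitive (M.rel B)) ∧
  (∀ B B' : Finset A, B ⊆ B' → ∀ w w' : W, M.rel B' w w' → M.rel B w w') ∧
  (∀ (w : W) (B B' : Finset A), M.rel B w w → M.rel B' w w → M.rel (B ∪ B') w w)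

/-- Satisfaction on pseudo-models: `D_B φ` quantifies over `∼_B`-successors. -/
def PseudoData.sat {A AP W : Type} (M : PseudoData A AP W) : W → Form A AP → Prop
  | w, .atom p => p ∈ M.label w
  | w, .neg φ => ¬ M.sat w φ
  | w, .and φ ψ => M.sat w φ ∧ M.sat w ψ
  | w, .dk B _ φ => ∀ w' : W, M.rel B w w' → M.sat w' φ

/-- The canonical pseudo-model of a proof system `P`: worlds are the maximal
`P`-consistent sets, `Γ ∼_B Δ` iff every `φ` with `D_B φ ∈ Γ` satisfies `φ ∈ Δ`,
and `L(Γ) = Γ ∩ AP`. -/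
def canonicalPsm (A AP : Type) [Fintype A] [Nonempty AP] (P : Form A AP → Prop) :
    PseudoData A AP {Γ : Set (Form A AP) // MaxConsistent P Γ} where
  rel := fun B Γ Δ => ∀ (hB : B.Nonempty) (φ : Form A AP), Form.dk B hB φ ∈ Γ.1 → φ ∈ Δ.1
  label := fun Γ => {p | Form.atom p ∈ Γ.1}

/-- `IsHist M w l` : the sequence starting at `w` with steps `l` is a history of `M`. -/
def IsHist {A AP W : Type} (M : PseudoData A AP W) : W → List (Finset A × W) → Prop
  | _, [] => True
  | w, (B, w') :: t => M.rel B w w' ∧ IsHist M w' t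

/-- A history `(w₀, B₁, w₁, …, B_k, w_k)` of a pseudo-model `M`. -/
structure Hist {A AP W : Type} (M : PseudoData A AP W) where
  first : W
  steps : List (Finset A × W)
  valid : IsHist M first steps

/-- The last world of a history. -/
def Hist.last {A AP W : Type} {M : PseudoData A AP W} (h : Hist M) : W :=
  (h.steps.map Prod.snd).getLastD h.first

/-- `h →_a h'` : `h'` extends `h` by one step `(B, w)` with `a ∈ B`. -/
def histStep {A AP W : Type} (M : PseudoData A AP W) (a : A) (h h' : Hist M) : Prop :=
  ∃ (B : Finset A) (w : W), a ∈ B ∧ h'.first = h.first ∧ h'.steps = h.steps ++ [(B, w)]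

/-- `∼^U_a` : the symmetric-transitive closure of `→_a`. -/
def histRel {A AP W : Type} (M : PseudoData A AP W) (a : A) : Hist M → Hist M → Prop :=
  Relation.TransGen (fun h h' => histStep M a h h' ∨ histStep M a h' h)

/-- The unravelling `U(M)` of a pseudo-model `M`: worlds are histories, relations are
the `∼^U_a`, and `L^U(h) = L(last h)`. -/
def unravel {A AP W : Type} (M : PseudoData A AP W) : PEData A AP (Hist M) where
  rel := histRel M
  label := fun h => M.label h.last

/-- World-equivalence `w ≡ w'` : same alive agents and related by every alive agent. -/
def pequiv {A AP W : Type} (M : PEData A AP W) (w w' : W) : Prop :=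
  M.live w = M.live w' ∧ ∀ a ∈ M.live w, M.rel a w w'

/-- The quotient of a partial epistemic model by world-equivalence. -/
def properify {A AP W : Type} (M : PEData A AP W) : PEData A AP (Quot (pequiv M)) where
  rel := fun a x y => ∃ w w' : W, x = Quot.mk _ w ∧ y = Quot.mk _ w' ∧ M.rel a w w'
  label := fun x => {p | ∃ w : W, x = Quot.mk _ w ∧ p ∈ M.label w}

/-! ### Local simplicial models, morphisms and the guarded positive fragment -/

/-- The data of a local simplicial model: atomic propositions label the vertices. -/
structure LocalSimpData (A AP V : Type) where
  S : Set (Finset V)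
  chi : V → A
  Wld : Set (Finset V)
  vlabel : V → Set AP

namespace LocalSimpData

variable {A AP V : Type}

/-- A facet: a simplex maximal under inclusion. -/
def IsFacet (C : LocalSimpData A AP V) (X : Finset V) : Prop :=
  X ∈ C.S ∧ ∀ Y ∈ C.S, X ⊆ Y → X = Y

/-- `C` is a local simplicial model with respect to the ownership map `owner : AP → A`:
a chromatic simplicial complex with `Facets ⊆ Wld ⊆ S`, where each vertex is labelled
with atomic propositions belonging to its colour. -/
def IsModel (C : LocalSimpData A AP V) (owner : AP → A) : Prop :=
  (∀ X ∈ C.S, X.Nonempty) ∧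
  (∀ v : V, ({v} : Finset V) ∈ C.S) ∧
  (∀ X ∈ C.S, ∀ Y : Finset V, Y ⊆ X → Y.Nonempty → Y ∈ C.S) ∧
  (∀ X ∈ C.S, ∀ v ∈ X, ∀ w ∈ X, C.chi v = C.chi w → v = w) ∧
  (∀ X, C.IsFacet X → X ∈ C.Wld) ∧ C.Wld ⊆ C.S ∧
  (∀ v : V, ∀ p ∈ C.vlabel v, owner p = C.chi v)

/-- The labelling of a world: the union of the labellings of its vertices. -/
def wlabel (C : LocalSimpData A AP V) (X : Finset V) : Set AP :=
  ⋃ v ∈ X, C.vlabel v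

end LocalSimpData

/-- Purely propositional formulas. -/
inductive PForm (AP : Type) : Type
  | atom : AP → PForm AP
  | neg : PForm AP → PForm AP
  | and : PForm AP → PForm AP → PForm AP

/-- The atomic propositions occurring in a propositional formula. -/
def PForm.atoms {AP : Type} : PForm AP → Set AP
  | .atom p => {p}
  | .neg ψ => ψ.atoms
  | .and ψ χ => ψ.atoms ∪ χ.atoms

/-- Satisfaction of propositional formulas at a world of a local simplicial model. -/
def PForm.psat {A AP V : Type} (C : LocalSimpData A AP V) (w : Finset V) : PForm AP → Prop
  | .atom p => p ∈ C.wlabel w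
  | .neg ψ => ¬ PForm.psat C w ψ
  | .and ψ χ => PForm.psat C w ψ ∧ PForm.psat C w χ

/-- The guarded positive epistemic fragment:
`φ ::= (alive_B ⇒ ψ_B) | φ∧φ | φ∨φ | D_U φ | C_U φ`. -/
inductive GForm (A AP : Type) : Type
  | guard : Finset A → PForm AP → GForm A AP
  | and : GForm A AP → GForm A AP → GForm A AP
  | or : GForm A AP → GForm A AP → GForm A AP
  | dk : Finset A → GForm A AP → GForm A AP
  | ck : Finset A → GForm A AP → GForm A AP

/-- Well-formedness of guarded formulas: in a guard `alive_B ⇒ ψ_B`, all atomic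
propositions of `ψ_B` belong to agents of `B`. -/
def GForm.WF {A AP : Type} (owner : AP → A) : GForm A AP → Prop
  | .guard B ψ => ∀ p ∈ ψ.atoms, owner p ∈ B
  | .and φ₁ φ₂ => φ₁.WF owner ∧ φ₂.WF owner
  | .or φ₁ φ₂ => φ₁.WF owner ∧ φ₂.WF owner
  | .dk _ φ => φ.WF owner
  | .ck _ φ => φ.WF owner

/-- Reachability through a sequence of worlds, consecutive ones sharing a
`U`-coloured simplex. -/
def creach {A AP V : Type} (C : LocalSimpData A AP V) (U : Finset A) :
    Finset V → Finset V → Prop :=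
  Relation.ReflTransGen
    (fun X Y => Y ∈ C.Wld ∧ (↑U : Set A) ⊆ C.chi '' ((↑X : Set V) ∩ ↑Y))

/-- Satisfaction of guarded positive formulas on local simplicial models. -/
def GForm.gsat {A AP V : Type} (C : LocalSimpData A AP V) :
    Finset V → GForm A AP → Prop
  | w, .guard B ψ => ((↑B : Set A) ⊆ C.chi '' (↑w : Set V)) → ψ.psat C w
  | w, .and φ₁ φ₂ => φ₁.gsat C w ∧ φ₂.gsat C w
  | w, .or φ₁ φ₂ => φ₁.gsat C w ∨ φ₂.gsat C w
  | w, .dk U φ => ∀ w' ∈ C.Wld, (↑U : Set A) ⊆ C.chi '' ((↑w : Set V) ∩ ↑w') → φ.gsat C w'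
  | w, .ck U φ => ∀ w' ∈ C.Wld, creach C U w w' → φ.gsat C w'

/-- Image of a simplex under a vertex map. -/
def fimage {V V' : Type} (f : V → V') (X : Finset V) : Finset V' :=
  X.image f

/-- Morphisms of local simplicial models: map simplexes to simplexes and worlds to
worlds, preserving colours and vertex labellings. -/
def IsMorphism {A AP V V' : Type} (C : LocalSimpData A AP V) (D : LocalSimpData A AP V')
    (f : V → V') : Prop :=
  (∀ X ∈ C.S, fimage f X ∈ D.S) ∧
  (∀ X ∈ C.Wld, fimage f X ∈ D.Wld) ∧
  (∀ v : V, D.chi (f v) = C.chi v) ∧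
  (∀ v : V, D.vlabel (f v) = C.vlabel v)

end

/-!
The canonical model of `SC` is only a pseudo-model: it has a relation `∼_B` for every group
`B`, which need not be the intersection of the `∼_a` for `a ∈ B`. Unravelling it into
histories `Γ₀ B₁ Γ₁ … B_k Γ_k` gives a partial epistemic model in which `∼_a` is generated by
one-step extensions along groups containing `a`. Histories form a tree, so histories related
by every `a ∈ B` are joined through a common ancestor by `B`-steps only, and their last worlds
are `∼_B`-related; hence truth is preserved. The unravelling is not proper, but its quotient by
"same alive agents, indistinguishable for each of them" is, and axiom `P` guarantees that
equivalent histories end in the same maximal consistent set, so truth survives the quotient.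
-/

section Valuation

variable {A AP : Type}

structure IsBooleanValuation (v : Form A AP → Prop) : Prop where
  neg_iff (ψ : Form A AP) : v ψ.neg ↔ ¬ v ψ
  and_iff (ψ χ : Form A AP) : v (ψ.and χ) ↔ v ψ ∧ v χ

namespace IsBooleanValuation

variable {v : Form A AP → Prop} (hv : IsBooleanValuation v)
include hv

theorem or_iff (ψ χ : Form A AP) : v (ψ.or χ) ↔ v ψ ∨ v χ := by
  rw [Form.or, hv.neg_iff, hv.and_iff, hv.neg_iff, hv.neg_iff]
  tauto

theorem imp_iff (ψ χ : Form A AP) : v (ψ.imp χ) ↔ (v ψ → v χ) := by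
  rw [Form.imp, hv.or_iff, hv.neg_iff]
  tauto

variable [Nonempty AP]

theorem verum : v (Form.verum : Form A AP) := by
  rw [Form.verum, hv.or_iff, hv.neg_iff]
  exact em _

theorem not_falsum : ¬ v (Form.falsum : Form A AP) := by
  rw [Form.falsum, hv.neg_iff, not_not]
  exact hv.verum

theorem bigAnd_iff (L : List (Form A AP)) : v (Form.bigAnd L) ↔ ∀ γ ∈ L, v γ := by
  induction L with
  | nil => simpa [Form.bigAnd] using hv.verum
  | cons γ t ih => rw [Form.bigAnd, hv.and_iff, ih, List.forall_mem_cons]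

end IsBooleanValuation

theorem isTaut_of_forall {φ : Form A AP} (h : ∀ v, IsBooleanValuation v → v φ) : IsTaut φ :=
  fun v hneg hand => h v ⟨hneg, hand⟩

end Valuation

section Derivations

variable {A AP : Type} [Fintype A] [Nonempty AP] {Ax : Form A AP → Prop}

theorem Prf.mp_taut {φ ψ : Form A AP} (ht : IsTaut (φ.imp ψ)) (h : Prf Ax φ) : Prf Ax ψ :=
  mp (taut ht) h

theorem Prf.dk_imp {φ ψ : Form A AP} (B : Finset A) (hB : B.Nonempty)
    (h : Prf Ax (φ.imp ψ)) : Prf Ax ((Form.dk B hB φ).imp (Form.dk B hB ψ)) :=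
  mp (axK B hB) (nec B hB h)

variable {Γ : Set (Form A AP)} {φ ψ : Form A AP}

namespace ProvesFrom

theorem of_prf (h : Prf Ax φ) : ProvesFrom (Prf Ax) Γ φ :=
  ⟨[], by simp, Prf.mp_taut (isTaut_of_forall fun v hv => by
    simp only [hv.imp_iff]
    exact fun h _ => h) h⟩

theorem of_mem (h : φ ∈ Γ) : ProvesFrom (Prf Ax) Γ φ :=
  ⟨[φ], by simpa using h, Prf.taut (isTaut_of_forall fun v hv => by
    simp [hv.imp_iff, hv.bigAnd_iff])⟩

theorem mp (h₁ : ProvesFrom (Prf Ax) Γ (φ.imp ψ)) (h₂ : ProvesFrom (Prf Ax) Γ φ) :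
    ProvesFrom (Prf Ax) Γ ψ := by
  obtain ⟨L₁, hL₁, p₁⟩ := h₁
  obtain ⟨L₂, hL₂, p₂⟩ := h₂
  refine ⟨L₁ ++ L₂, by simpa [or_imp, forall_and] using And.intro hL₁ hL₂, ?_⟩
  refine Prf.mp (Prf.mp_taut (isTaut_of_forall fun v hv => ?_) p₁) p₂
  simp only [hv.imp_iff, hv.bigAnd_iff, List.mem_append]
  intro h₁ h₂ h
  exact h₁ (fun γ hγ => h γ (.inl hγ)) (h₂ fun γ hγ => h γ (.inr hγ))

theorem mp_taut (ht : IsTaut (φ.imp ψ)) (h : ProvesFrom (Prf Ax) Γ φ) :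
    ProvesFrom (Prf Ax) Γ ψ :=
  (of_prf (Prf.taut ht)).mp h

theorem deduction (h : ProvesFrom (Prf Ax) (insert φ Γ) ψ) :
    ProvesFrom (Prf Ax) Γ (φ.imp ψ) := by
  obtain ⟨L, hL, p⟩ := h
  refine ⟨L.filter (· ∈ Γ), by simp, Prf.mp_taut (isTaut_of_forall fun v hv => ?_) p⟩
  simp only [hv.imp_iff, hv.bigAnd_iff, List.mem_filter, decide_eq_true_eq, and_imp]
  intro hψ hΓ hφ
  refine hψ fun γ hγ => ?_
  rcases hL γ hγ with rfl | h
  exacts [hφ, hΓ γ hγ h]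

end ProvesFrom

theorem exists_maxConsistent_superset (h : ConsistentSet (Prf Ax) Γ) :
    ∃ Δ, Γ ⊆ Δ ∧ MaxConsistent (Prf Ax) Δ := by
  obtain ⟨Δ, hΓΔ, hmax⟩ := zorn_subset_nonempty {Δ | ConsistentSet (Prf Ax) Δ}
    (fun c hc hchain hne => by
      refine ⟨⋃₀ c, fun ⟨L, hL, p⟩ => ?_, fun _ => Set.subset_sUnion_of_mem⟩
      obtain ⟨Θ, hΘ, hLΘ⟩ := hchain.directedOn.exists_mem_subset_of_finite_of_subset_sUnion
        hne (List.finite_toSet L) hL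
      exact hc hΘ ⟨L, hLΘ, p⟩) Γ h
  refine ⟨Δ, hΓΔ, hmax.prop, fun φ hφ hcons => hφ ?_⟩
  exact hmax.eq_of_subset hcons (Set.subset_insert φ Δ) ▸ Set.mem_insert φ Δ

namespace MaxConsistent

variable (hΓ : MaxConsistent (Prf Ax) Γ)
include hΓ

theorem provesFrom_imp_falsum (h : φ ∉ Γ) : ProvesFrom (Prf Ax) Γ (φ.imp Form.falsum) := by
  have := hΓ.2 φ h
  rw [ConsistentSet, not_not] at this
  exact this.deduction

theorem mem_of_provesFrom (h : ProvesFrom (Prf Ax) Γ φ) : φ ∈ Γ :=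
  by_contra fun hφ => hΓ.1 ((hΓ.provesFrom_imp_falsum hφ).mp h)

theorem mem_of_prf (h : Prf Ax φ) : φ ∈ Γ :=
  hΓ.mem_of_provesFrom (.of_prf h)

theorem mem_of_taut {L : List (Form A AP)} (hL : ∀ γ ∈ L, γ ∈ Γ)
    (ht : IsTaut ((Form.bigAnd L).imp φ)) : φ ∈ Γ :=
  hΓ.mem_of_provesFrom ⟨L, hL, Prf.taut ht⟩

theorem mp (h₁ : φ.imp ψ ∈ Γ) (h₂ : φ ∈ Γ) : ψ ∈ Γ :=
  hΓ.mem_of_provesFrom ((ProvesFrom.of_mem h₁).mp (.of_mem h₂))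

theorem falsum_notMem : Form.falsum ∉ Γ :=
  fun h => hΓ.1 (.of_mem h)

theorem neg_mem_iff : φ.neg ∈ Γ ↔ φ ∉ Γ := by
  refine ⟨fun hn h => hΓ.falsum_notMem (hΓ.mem_of_taut (L := [φ.neg, φ]) (by simp [hn, h]) ?_),
    fun h => hΓ.mem_of_provesFrom ((hΓ.provesFrom_imp_falsum h).mp_taut ?_)⟩
  all_goals
    refine isTaut_of_forall fun v hv => ?_
    simp [hv.imp_iff, hv.bigAnd_iff, hv.neg_iff, hv.not_falsum]

theorem and_mem_iff : φ.and ψ ∈ Γ ↔ φ ∈ Γ ∧ ψ ∈ Γ := by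
  refine ⟨fun h => ⟨hΓ.mem_of_taut (L := [φ.and ψ]) (by simpa) ?_,
    hΓ.mem_of_taut (L := [φ.and ψ]) (by simpa) ?_⟩,
    fun h => hΓ.mem_of_taut (L := [φ, ψ]) (by simpa) ?_⟩
  all_goals
    refine isTaut_of_forall fun v hv => ?_
    simp only [hv.imp_iff, hv.bigAnd_iff, hv.and_iff, List.forall_mem_cons]
    tauto

theorem or_mem_iff : φ.or ψ ∈ Γ ↔ φ ∈ Γ ∨ ψ ∈ Γ := by
  rw [Form.or, hΓ.neg_mem_iff, hΓ.and_mem_iff, hΓ.neg_mem_iff, hΓ.neg_mem_iff]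
  tauto

theorem exists_mem_of_bigOr_mem {L : List (Form A AP)} (h : Form.bigOr L ∈ Γ) :
    ∃ γ ∈ L, γ ∈ Γ := by
  induction L with
  | nil => exact absurd h hΓ.falsum_notMem
  | cons γ t ih =>
    rcases hΓ.or_mem_iff.mp h with h | h
    · exact ⟨γ, List.mem_cons_self, h⟩
    · obtain ⟨δ, hδ, hδΓ⟩ := ih h
      exact ⟨δ, List.mem_cons_of_mem _ hδ, hδΓ⟩

theorem bigAnd_mem {L : List (Form A AP)} (h : ∀ γ ∈ L, γ ∈ Γ) : Form.bigAnd L ∈ Γ :=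
  hΓ.mem_of_taut h (isTaut_of_forall fun v hv => by simp [hv.imp_iff])

end MaxConsistent

theorem exists_maxConsistent_notMem (h : ¬ Prf Ax φ) :
    ∃ Γ, MaxConsistent (Prf Ax) Γ ∧ φ ∉ Γ := by
  have hcons : ConsistentSet (Prf Ax) {φ.neg} := by
    rintro ⟨L, hL, p⟩
    refine h (Prf.mp_taut (isTaut_of_forall fun v hv => ?_) p)
    simp only [hv.imp_iff, hv.bigAnd_iff]
    intro hL'
    by_contra hφ
    refine hv.not_falsum (hL' fun γ hγ => ?_)
    rw [Set.mem_singleton_iff.mp (hL γ hγ), hv.neg_iff]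
    exact hφ
  obtain ⟨Γ, hsub, hΓ⟩ := exists_maxConsistent_superset hcons
  exact ⟨Γ, hΓ, hΓ.neg_mem_iff.mp (hsub rfl)⟩

end Derivations

namespace PseudoData.IsPseudo

variable {A AP W : Type} [DecidableEq A] {M : PseudoData A AP W} (hM : M.IsPseudo)
  {B : Finset A} {w w' : W}
include hM

theorem rel_symm (h : M.rel B w w') : M.rel B w' w := hM.1 B h

theorem rel_trans {w'' : W} (h : M.rel B w w') (h' : M.rel B w' w'') : M.rel B w w'' :=
  hM.2.1 B h h'

theorem rel_anti {B' : Finset A} (hBB' : B ⊆ B') (h : M.rel B' w w') : M.rel B w w' :=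
  hM.2.2.1 B B' hBB' w w' h

theorem rel_self_left (h : M.rel B w w') : M.rel B w w := hM.rel_trans h (hM.rel_symm h)

theorem rel_self_right (h : M.rel B w w') : M.rel B w' w' := hM.rel_trans (hM.rel_symm h) h

theorem rel_self_of_forall_singleton (hB : B.Nonempty) (h : ∀ a ∈ B, M.rel {a} w w) :
    M.rel B w w := by
  induction B using Finset.induction_on with
  | empty => exact absurd hB Finset.not_nonempty_empty
  | insert a s _ ih =>
    rcases s.eq_empty_or_nonempty with rfl | hs
    · exact h a (Finset.mem_insert_self a ∅)
    rw [Finset.insert_eq]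
    exact hM.2.2.2 w _ _ (h a (Finset.mem_insert_self a s))
      (ih hs fun b hb => h b (Finset.mem_insert_of_mem hb))

end PseudoData.IsPseudo

section Canonical

variable {A AP : Type} [Fintype A] [Nonempty AP] {Ax : Form A AP → Prop}

local notation "𝓜" => canonicalPsm A AP (Prf Ax)

namespace MaxConsistent

variable {Γ : Set (Form A AP)} (hΓ : MaxConsistent (Prf Ax) Γ) {B : Finset A} {hB : B.Nonempty}
include hΓ

theorem dk_mp {φ ψ : Form A AP} (h₁ : Form.dk B hB (φ.imp ψ) ∈ Γ) (h₂ : Form.dk B hB φ ∈ Γ) :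
    Form.dk B hB ψ ∈ Γ :=
  hΓ.mp (hΓ.mp (hΓ.mem_of_prf (Prf.axK B hB)) h₁) h₂

theorem dk_bigAnd_mem {L : List (Form A AP)} (h : ∀ γ ∈ L, Form.dk B hB γ ∈ Γ) :
    Form.dk B hB (Form.bigAnd L) ∈ Γ := by
  induction L with
  | nil => exact hΓ.mem_of_prf (Prf.nec B hB (Prf.taut (isTaut_of_forall fun _ hv => hv.verum)))
  | cons γ t ih =>
    rw [List.forall_mem_cons] at h
    refine hΓ.dk_mp (hΓ.dk_mp (hΓ.mem_of_prf (Prf.nec B hB (Prf.taut ?_))) h.1) (ih h.2)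
    exact isTaut_of_forall fun v hv => by
      simp only [Form.bigAnd, hv.imp_iff, hv.and_iff]
      exact fun h₁ h₂ => ⟨h₁, h₂⟩

theorem dk_mem_of_prf {L : List (Form A AP)} {ψ : Form A AP}
    (hL : ∀ γ ∈ L, Form.dk B hB γ ∈ Γ) (h : Prf Ax ((Form.bigAnd L).imp ψ)) :
    Form.dk B hB ψ ∈ Γ :=
  hΓ.mp (hΓ.mem_of_prf (Prf.dk_imp B hB h)) (hΓ.dk_bigAnd_mem hL)

end MaxConsistent

abbrev MCS (Ax : Form A AP → Prop) : Type := {Γ : Set (Form A AP) // MaxConsistent (Prf Ax) Γ}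

variable {B B' : Finset A} {Γ Δ Θ : MCS Ax}

theorem canonicalPsm_exists_rel {hB : B.Nonempty} {ψ : Form A AP}
    (h : Form.dk B hB ψ ∉ Γ.1) : ∃ Δ : MCS Ax, (𝓜).rel B Γ Δ ∧ ψ ∉ Δ.1 := by
  have hcons : ConsistentSet (Prf Ax) (insert ψ.neg {χ | Form.dk B hB χ ∈ Γ.1}) := by
    intro hincons
    obtain ⟨L, hL, p⟩ := ProvesFrom.deduction hincons
    refine h (Γ.2.dk_mem_of_prf hL (Prf.mp_taut (isTaut_of_forall fun v hv => ?_) p))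
    simp only [hv.imp_iff, hv.neg_iff]
    exact fun h hL => by_contra fun hψ => hv.not_falsum (h hL hψ)
  obtain ⟨Δ, hsub, hΔ⟩ := exists_maxConsistent_superset hcons
  exact ⟨⟨Δ, hΔ⟩, fun _ χ hχ => hsub (Set.mem_insert_of_mem _ hχ),
    hΔ.neg_mem_iff.mp (hsub (Set.mem_insert _ _))⟩

theorem canonicalPsm_sat_iff (ψ : Form A AP) (Γ : MCS Ax) : (𝓜).sat Γ ψ ↔ ψ ∈ Γ.1 := by
  induction ψ generalizing Γ with
  | atom p => rfl
  | neg ψ ih => rw [PseudoData.sat, ih, Γ.2.neg_mem_iff]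
  | and ψ χ ih₁ ih₂ => rw [PseudoData.sat, ih₁, ih₂, Γ.2.and_mem_iff]
  | dk B hB ψ ih =>
    refine ⟨fun hsat => by_contra fun hmem => ?_, fun hmem Δ hrel => (ih Δ).mpr (hrel hB ψ hmem)⟩
    obtain ⟨Δ, hrel, hψ⟩ := canonicalPsm_exists_rel hmem
    exact hψ ((ih Δ).mp (hsat Δ hrel))

theorem canonicalPsm_rel_symm (h : (𝓜).rel B Γ Δ) : (𝓜).rel B Δ Γ := by
  intro hB φ hφ
  by_contra hφΓ
  have hBΓ : Form.dk B hB (Form.dk B hB φ.neg.neg).neg ∈ Γ.1 :=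
    Γ.2.mp (Γ.2.mem_of_prf (Prf.axB B hB)) (Γ.2.neg_mem_iff.mpr hφΓ)
  refine Δ.2.neg_mem_iff.mp (h hB _ hBΓ) (Δ.2.dk_mem_of_prf (L := [φ]) (by simpa) (Prf.taut ?_))
  exact isTaut_of_forall fun v hv => by simp [hv.imp_iff, hv.neg_iff, hv.bigAnd_iff]

theorem canonicalPsm_rel_trans (h₁ : (𝓜).rel B Γ Δ) (h₂ : (𝓜).rel B Δ Θ) : (𝓜).rel B Γ Θ :=
  fun hB φ hφ => h₂ hB φ (h₁ hB _ (Γ.2.mp (Γ.2.mem_of_prf (Prf.ax4 B hB)) hφ))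

theorem canonicalPsm_rel_anti (hBB' : B ⊆ B') (h : (𝓜).rel B' Γ Δ) : (𝓜).rel B Γ Δ :=
  fun hB φ hφ => h (hB.mono hBB') φ (Γ.2.mp (Γ.2.mem_of_prf (Prf.axMono B B' hB _ hBB')) hφ)

theorem canonicalPsm_rel_self_iff (hB : B.Nonempty) :
    (𝓜).rel B Γ Γ ↔ Form.aliveGrp B hB ∈ Γ.1 := by
  rw [Form.aliveGrp, Γ.2.neg_mem_iff]
  refine ⟨fun h hdead => Γ.2.falsum_notMem (h hB _ hdead), fun h => ?_⟩
  -- a `∼_B`-successor of `Γ` exists, and `∼_B` is symmetric and transitive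
  obtain ⟨Δ, hrel, -⟩ := canonicalPsm_exists_rel h
  exact canonicalPsm_rel_trans hrel (canonicalPsm_rel_symm hrel)

theorem canonicalPsm_isPseudo : (𝓜).IsPseudo := by
  refine ⟨fun _ _ _ => canonicalPsm_rel_symm, fun _ _ _ _ => canonicalPsm_rel_trans,
    fun _ _ hBB' _ _ => canonicalPsm_rel_anti hBB', fun Γ B B' h h' => ?_⟩
  rcases B.eq_empty_or_nonempty with rfl | hB
  · simpa using h'
  rcases B'.eq_empty_or_nonempty with rfl | hB'
  · simpa using h
  rw [canonicalPsm_rel_self_iff hB] at h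
  rw [canonicalPsm_rel_self_iff hB'] at h'
  rw [canonicalPsm_rel_self_iff (unionNE hB)]
  exact Γ.2.mp (Γ.2.mem_of_prf (Prf.axUnion B B' hB hB')) (Γ.2.and_mem_iff.mpr ⟨h, h'⟩)

theorem canonicalPsm_exists_rel_self (Γ : MCS Ax) : ∃ a : A, (𝓜).rel {a} Γ Γ := by
  obtain ⟨γ, hγ, hγΓ⟩ := Γ.2.exists_mem_of_bigOr_mem (Γ.2.mem_of_prf (Prf.axNE (Ax := Ax)))
  obtain ⟨a, -, rfl⟩ := List.mem_map.mp hγ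
  exact ⟨a, (canonicalPsm_rel_self_iff (Finset.singleton_nonempty a)).mpr hγΓ⟩

theorem canonicalPsm_deadGrp_mem {C : Finset A} (h : ∀ a ∈ C, ¬ (𝓜).rel {a} Γ Γ) :
    Form.deadGrp C ∈ Γ.1 := by
  refine Γ.2.bigAnd_mem fun γ hγ => ?_
  obtain ⟨a, ha, rfl⟩ := List.mem_map.mp hγ
  have := mt (canonicalPsm_rel_self_iff (Finset.singleton_nonempty a)).mpr
    (h a (Finset.mem_toList.mp ha))
  rwa [Form.aliveGrp, Γ.2.neg_mem_iff, not_not] at this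

theorem canonicalPsm_subset_of_rel (hB : B.Nonempty) (hΓ : ∀ a, (𝓜).rel {a} Γ Γ ↔ a ∈ B)
    (hΔ : ∀ a, (𝓜).rel {a} Δ Δ → a ∈ B) (h : (𝓜).rel B Γ Δ) : Γ.1 ⊆ Δ.1 := by
  have halive : Form.aliveGrp B hB ∈ Γ.1 :=
    (canonicalPsm_rel_self_iff hB).mp (canonicalPsm_isPseudo.rel_self_of_forall_singleton hB
      fun a ha => (hΓ a).mpr ha)
  have hdeadΓ : Form.deadGrp Bᶜ ∈ Γ.1 :=
    canonicalPsm_deadGrp_mem fun a ha hrel => Finset.mem_compl.mp ha ((hΓ a).mp hrel)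
  have hdeadΔ : Form.deadGrp Bᶜ ∈ Δ.1 :=
    canonicalPsm_deadGrp_mem fun a ha hrel => Finset.mem_compl.mp ha (hΔ a hrel)
  intro φ hφ
  have hP := Γ.2.mp (Γ.2.mem_of_prf (Prf.axP B hB))
    (Γ.2.and_mem_iff.mpr ⟨Γ.2.and_mem_iff.mpr ⟨halive, hdeadΓ⟩, hφ⟩)
  exact Δ.2.mp (h hB _ hP) hdeadΔ

end Canonical

section Unravelling

variable {A AP W : Type} {M : PseudoData A AP W}

def lastFrom (w : W) (t : List (Finset A × W)) : W := (t.map Prod.snd).getLastD w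

theorem lastFrom_cons (w : W) (e : Finset A × W) (t : List (Finset A × W)) :
    lastFrom w (e :: t) = lastFrom e.2 t := by
  rw [lastFrom, lastFrom, List.map_cons, List.getLastD_cons]

theorem lastFrom_append (w : W) (s t : List (Finset A × W)) :
    lastFrom w (s ++ t) = lastFrom (lastFrom w s) t := by
  induction s generalizing w with
  | nil => rfl
  | cons e s ih => rw [List.cons_append, lastFrom_cons, lastFrom_cons, ih]

theorem isHist_append {w : W} {s t : List (Finset A × W)} :
    IsHist M w (s ++ t) ↔ IsHist M w s ∧ IsHist M (lastFrom w s) t := by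
  induction s generalizing w with
  | nil => simp [IsHist, lastFrom]
  | cons e s ih =>
    simp only [List.cons_append, IsHist, ih, lastFrom_cons, and_assoc]

namespace Hist

theorem last_eq_lastFrom (h : Hist M) : h.last = lastFrom h.first h.steps := rfl

def extend (h : Hist M) (B : Finset A) (w : W) (hrel : M.rel B h.last w) : Hist M :=
  ⟨h.first, h.steps ++ [(B, w)], isHist_append.mpr ⟨h.valid, hrel, trivial⟩⟩

variable {a : A} {B : Finset A} {w : W} {h h' : Hist M}

theorem last_extend (hrel : M.rel B h.last w) : (h.extend B w hrel).last = w := by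
  rw [last_eq_lastFrom, extend, lastFrom_append]
  rfl

theorem histStep_extend (ha : a ∈ B) (hrel : M.rel B h.last w) :
    histStep M a h (h.extend B w hrel) :=
  ⟨B, w, ha, rfl, rfl⟩

theorem exists_rel_last_of_histStep (hs : histStep M a h h') :
    ∃ B, a ∈ B ∧ M.rel B h.last h'.last := by
  obtain ⟨B, w, ha, hfirst, hsteps⟩ := hs
  have hv := h'.valid
  rw [hsteps, hfirst, isHist_append] at hv
  refine ⟨B, ha, ?_⟩
  rw [last_eq_lastFrom h', hsteps, hfirst, lastFrom_append]
  exact hv.2.1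

def DescendsVia (p : Finset A → Prop) (m h : Hist M) : Prop :=
  h.first = m.first ∧ ∃ t, h.steps = m.steps ++ t ∧ ∀ e ∈ t, p e.1

namespace DescendsVia

variable {p q : Finset A → Prop} {m m' : Hist M}

theorem refl (h : Hist M) : h.DescendsVia p h :=
  ⟨rfl, [], by simp, by simp⟩

theorem trans (h₁ : m.DescendsVia p h) (h₂ : h.DescendsVia p h') : m.DescendsVia p h' := by
  obtain ⟨hf₁, t₁, ht₁, hp₁⟩ := h₁
  obtain ⟨hf₂, t₂, ht₂, hp₂⟩ := h₂
  refine ⟨hf₂.trans hf₁, t₁ ++ t₂, by rw [ht₂, ht₁, List.append_assoc], ?_⟩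
  simpa [or_imp, forall_and] using And.intro hp₁ hp₂

theorem of_histStep (hs : histStep M a h h') : h.DescendsVia (a ∈ ·) h' := by
  obtain ⟨B, w, ha, hfirst, hsteps⟩ := hs
  exact ⟨hfirst, [(B, w)], hsteps, by simpa using ha⟩

theorem steps_prefix (hd : m.DescendsVia p h) : m.steps <+: h.steps := by
  obtain ⟨-, t, ht, -⟩ := hd
  exact ⟨t, ht.symm⟩

theorem of_length_le (hm : m.DescendsVia p h) (hm' : m'.DescendsVia q h)
    (hlen : m.steps.length ≤ m'.steps.length) :
    m.DescendsVia p m' ∧ m'.DescendsVia p h := by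
  obtain ⟨u, hu⟩ := List.prefix_of_prefix_length_le hm.steps_prefix hm'.steps_prefix hlen
  obtain ⟨hf, t, ht, hp⟩ := hm
  obtain ⟨hf', s, hs, -⟩ := hm'
  have hts : t = u ++ s := by
    apply List.append_cancel_left (as := m.steps)
    rw [← ht, hs, ← hu, List.append_assoc]
  subst hts
  simp only [List.mem_append, or_imp, forall_and] at hp
  exact ⟨⟨hf'.symm.trans hf, u, hu.symm, hp.1⟩, ⟨hf', s, hs, hp.2⟩⟩

theorem forall_mem {B : Finset A} (hB : B.Nonempty) (hd : ∀ a ∈ B, m.DescendsVia (a ∈ ·) h) :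
    m.DescendsVia (B ⊆ ·) h := by
  obtain ⟨a₀, ha₀⟩ := hB
  obtain ⟨hf, t, ht, -⟩ := hd a₀ ha₀
  refine ⟨hf, t, ht, fun e he a ha => ?_⟩
  obtain ⟨-, s, hs, hp⟩ := hd a ha
  obtain rfl : s = t := List.append_cancel_left (hs.symm.trans ht)
  exact hp e he

end DescendsVia

end Hist

open Hist

theorem histRel_symm {a : A} {h h' : Hist M} (hr : histRel M a h h') : histRel M a h' h := by
  induction hr with
  | single hs => exact .single hs.symm
  | tail _ hs ih => exact .head hs.symm ih

theorem histRel_self_of_rel_self {a : A} {h : Hist M} (hrel : M.rel {a} h.last h.last) :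
    histRel M a h h :=
  have hs := h.histStep_extend (Finset.mem_singleton_self a) hrel
  .tail (.single (.inl hs)) (.inr hs)

theorem exists_descendsVia_of_histRel {a : A} {h h' : Hist M} (hr : histRel M a h h') :
    ∃ m : Hist M, m.DescendsVia (a ∈ ·) h ∧ m.DescendsVia (a ∈ ·) h' := by
  replace hr := hr.to_reflTransGen
  induction hr with
  | refl => exact ⟨h, .refl h, .refl h⟩
  | tail _ hs ih =>
    rename_i y z _
    obtain ⟨m₁, hm₁h, hm₁y⟩ := ih
    obtain ⟨m₂, hm₂y, hm₂z⟩ : ∃ m₂ : Hist M, m₂.DescendsVia (a ∈ ·) y ∧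
        m₂.DescendsVia (a ∈ ·) z := by
      rcases hs with hs | hs
      exacts [⟨y, .refl y, .of_histStep hs⟩, ⟨z, .of_histStep hs, .refl z⟩]
    -- `m₁` and `m₂` are both ancestors of `y`, so the shorter one is an ancestor of the other
    rcases le_total m₁.steps.length m₂.steps.length with hlen | hlen
    · exact ⟨m₁, hm₁h, ((hm₁y.of_length_le hm₂y hlen).1).trans hm₂z⟩
    · exact ⟨m₂, ((hm₂y.of_length_le hm₁y hlen).1).trans hm₁h, hm₂z⟩

theorem exists_descendsVia_of_forall_histRel {B : Finset A} (hB : B.Nonempty) {h h' : Hist M}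
    (hr : ∀ a ∈ B, histRel M a h h') :
    ∃ m : Hist M, m.DescendsVia (B ⊆ ·) h ∧ m.DescendsVia (B ⊆ ·) h' := by
  choose F hF using fun a (ha : a ∈ B) => exists_descendsVia_of_histRel (hr a ha)
  obtain ⟨⟨a₀, ha₀⟩, -, hmax⟩ :=
    B.attach.exists_max_image (fun a => (F a.1 a.2).steps.length) hB.attach
  have hlen : ∀ a (ha : a ∈ B), (F a ha).steps.length ≤ (F a₀ ha₀).steps.length :=
    fun a ha => hmax ⟨a, ha⟩ (Finset.mem_attach _ _)
  exact ⟨F a₀ ha₀,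
    .forall_mem hB fun a ha => ((hF a ha).1.of_length_le (hF a₀ ha₀).1 (hlen a ha)).2,
    .forall_mem hB fun a ha => ((hF a ha).2.of_length_le (hF a₀ ha₀).2 (hlen a ha)).2⟩

theorem unravel_isPE : (unravel M).IsPE :=
  fun _ => ⟨fun _ _ => histRel_symm, fun _ _ _ => Relation.TransGen.trans⟩

variable [DecidableEq A] (hM : M.IsPseudo)
include hM

theorem rel_lastFrom {B : Finset A} {w : W} {t : List (Finset A × W)} (ht : IsHist M w t)
    (hB : ∀ e ∈ t, B ⊆ e.1) (hself : M.rel B (lastFrom w t) (lastFrom w t)) :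
    M.rel B w (lastFrom w t) := by
  induction t generalizing w with
  | nil => exact hself
  | cons e t ih =>
    rw [List.forall_mem_cons] at hB
    rw [lastFrom_cons] at hself ⊢
    exact hM.rel_trans (hM.rel_anti hB.1 ht.1) (ih ht.2 hB.2 hself)

theorem Hist.DescendsVia.rel_last {B : Finset A} {m h : Hist M} (hd : m.DescendsVia (B ⊆ ·) h)
    (hself : M.rel B h.last h.last) : M.rel B m.last h.last := by
  obtain ⟨hfirst, t, ht, htB⟩ := hd
  have hv := h.valid
  rw [ht, hfirst, isHist_append] at hv
  rw [last_eq_lastFrom h, ht, hfirst, lastFrom_append] at hself ⊢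
  exact rel_lastFrom hM hv.2 htB hself

theorem rel_self_last_of_histRel {a : A} {h h' : Hist M} (hr : histRel M a h h') :
    M.rel {a} h.last h.last := by
  obtain ⟨z, hz, -⟩ := Relation.TransGen.head'_iff.mp hr
  rcases hz with hz | hz
  · obtain ⟨B, ha, hrel⟩ := exists_rel_last_of_histStep hz
    exact hM.rel_anti (Finset.singleton_subset_iff.mpr ha) (hM.rel_self_left hrel)
  · obtain ⟨B, ha, hrel⟩ := exists_rel_last_of_histStep hz
    exact hM.rel_anti (Finset.singleton_subset_iff.mpr ha) (hM.rel_self_right hrel)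

theorem rel_last_of_forall_histRel {B : Finset A} (hB : B.Nonempty) {h h' : Hist M}
    (hr : ∀ a ∈ B, histRel M a h h') : M.rel B h.last h'.last := by
  obtain ⟨m, hmh, hmh'⟩ := exists_descendsVia_of_forall_histRel hB hr
  have hself : M.rel B h.last h.last := hM.rel_self_of_forall_singleton hB fun a ha =>
    rel_self_last_of_histRel hM (hr a ha)
  have hself' : M.rel B h'.last h'.last := hM.rel_self_of_forall_singleton hB fun a ha =>
    rel_self_last_of_histRel hM (histRel_symm (hr a ha))
  exact hM.rel_trans (hM.rel_symm (hmh.rel_last hM hself)) (hmh'.rel_last hM hself')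

theorem unravel_mem_live_iff {a : A} {h : Hist M} :
    a ∈ (unravel M).live h ↔ M.rel {a} h.last h.last :=
  ⟨rel_self_last_of_histRel hM, histRel_self_of_rel_self⟩

theorem unravel_noEmptyWorld (hne : ∀ w, ∃ a, M.rel {a} w w) : (unravel M).NoEmptyWorld := by
  intro h
  obtain ⟨a, ha⟩ := hne h.last
  exact ⟨a, (unravel_mem_live_iff hM).mpr ha⟩

theorem unravel_sat_iff (ψ : Form A AP) (h : Hist M) : (unravel M).sat h ψ ↔ M.sat h.last ψ := by
  induction ψ generalizing h with
  | atom p => rfl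
  | neg ψ ih => rw [PEData.sat, PseudoData.sat, ih]
  | and ψ χ ih₁ ih₂ => rw [PEData.sat, PseudoData.sat, ih₁, ih₂]
  | dk B hB ψ ih =>
    refine ⟨fun hsat w hrel => ?_, fun hsat h' hr => (ih h').mpr
      (hsat _ (rel_last_of_forall_histRel hM hB hr))⟩
    rw [← h.last_extend hrel, ← ih]
    exact hsat _ fun a ha => .single (.inl (h.histStep_extend ha hrel))

end Unravelling

section Properify

variable {A AP W : Type} {M : PEData A AP W} (hpe : M.IsPE)
include hpe

theorem pequiv_equivalence : Equivalence (pequiv M) := by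
  refine ⟨fun w => ⟨rfl, fun a ha => ha⟩, fun ⟨hlive, hrel⟩ => ⟨hlive.symm, fun a ha => ?_⟩,
    fun ⟨hlive, hrel⟩ ⟨hlive', hrel'⟩ => ⟨hlive.trans hlive', fun a ha => ?_⟩⟩
  · exact (hpe a).1 (hrel a (hlive ▸ ha))
  · exact (hpe a).2 (hrel a ha) (hrel' a (hlive ▸ ha))

theorem properify_mk_eq_iff {w w' : W} :
    Quot.mk (pequiv M) w = Quot.mk (pequiv M) w' ↔ pequiv M w w' :=
  Quot.eq.trans (Equivalence.eqvGen_iff (pequiv_equivalence hpe))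

theorem properify_rel_mk_iff {a : A} {w w' : W} :
    (properify M).rel a (Quot.mk _ w) (Quot.mk _ w') ↔ M.rel a w w' := by
  refine ⟨fun ⟨u, u', hu, hu', hrel⟩ => ?_, fun h => ⟨w, w', rfl, rfl, h⟩⟩
  obtain ⟨-, huw⟩ := (properify_mk_eq_iff hpe).mp hu.symm
  obtain ⟨hlive', hu'w'⟩ := (properify_mk_eq_iff hpe).mp hu'.symm
  -- `a` is alive in `u` and in `u'`, so the equivalences `u ≡ w`, `u' ≡ w'` are `∼_a`-steps
  have hau : M.rel a u u := (hpe a).2 hrel ((hpe a).1 hrel)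
  have hau' : M.rel a u' u' := (hpe a).2 ((hpe a).1 hrel) hrel
  exact (hpe a).2 ((hpe a).1 (huw a hau)) ((hpe a).2 hrel (hu'w' a hau'))

theorem properify_live_mk (w : W) : (properify M).live (Quot.mk _ w) = M.live w :=
  Set.ext fun _ => properify_rel_mk_iff hpe

theorem properify_isPE : (properify M).IsPE := by
  refine fun a => ⟨fun _ _ ⟨w, w', hw, hw', hrel⟩ => ⟨w', w, hw', hw, (hpe a).1 hrel⟩,
    fun x y z hxy hyz => ?_⟩
  obtain ⟨u, rfl⟩ := Quot.exists_rep x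
  obtain ⟨v, rfl⟩ := Quot.exists_rep y
  obtain ⟨t, rfl⟩ := Quot.exists_rep z
  rw [properify_rel_mk_iff hpe] at hxy hyz ⊢
  exact (hpe a).2 hxy hyz

theorem properify_noEmptyWorld (hne : M.NoEmptyWorld) : (properify M).NoEmptyWorld := by
  intro x
  obtain ⟨w, rfl⟩ := Quot.exists_rep x
  rw [properify_live_mk hpe]
  exact hne w

theorem properify_proper : (properify M).Proper := by
  intro x y hxy hlive
  obtain ⟨w, rfl⟩ := Quot.exists_rep x
  obtain ⟨w', rfl⟩ := Quot.exists_rep y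
  rw [properify_live_mk hpe, properify_live_mk hpe] at hlive
  rw [ne_eq, properify_mk_eq_iff hpe, pequiv, not_and] at hxy
  simp only [properify_live_mk hpe, properify_rel_mk_iff hpe]
  simpa using hxy hlive

variable (hlabel : ∀ w w' : W, pequiv M w w' → M.label w = M.label w')
include hlabel

theorem properify_label_mk (w : W) : (properify M).label (Quot.mk _ w) = M.label w := by
  ext p
  refine ⟨fun ⟨w', hw', hp⟩ => ?_, fun hp => ⟨w, rfl, hp⟩⟩
  rwa [hlabel w w' ((properify_mk_eq_iff hpe).mp hw')]

theorem properify_sat_iff (ψ : Form A AP) (w : W) :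
    (properify M).sat (Quot.mk _ w) ψ ↔ M.sat w ψ := by
  induction ψ generalizing w with
  | atom p =>
    change p ∈ (properify M).label _ ↔ p ∈ M.label w
    rw [properify_label_mk hpe hlabel]
  | neg ψ ih => rw [PEData.sat, PEData.sat, ih]
  | and ψ χ ih₁ ih₂ => rw [PEData.sat, PEData.sat, ih₁, ih₂]
  | dk B hB ψ ih =>
    refine ⟨fun hsat w' hrel => (ih w').mp (hsat _ fun a ha => ?_), fun hsat x hrel => ?_⟩
    · exact (properify_rel_mk_iff hpe).mpr (hrel a ha)
    obtain ⟨w', rfl⟩ := Quot.exists_rep x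
    exact (ih w').mpr (hsat w' fun a ha => (properify_rel_mk_iff hpe).mp (hrel a ha))

end Properify

section Completeness

variable {A AP : Type} [Fintype A] [Nonempty AP] {Ax : Form A AP → Prop}

local notation "𝓜" => canonicalPsm A AP (Prf Ax)

theorem last_subset_of_pequiv_unravel {h h' : Hist (𝓜)} (he : pequiv (unravel (𝓜)) h h') :
    h.last.1 ⊆ h'.last.1 := by
  set B : Finset A := Finset.univ.filter fun a => (𝓜).rel {a} h.last h.last
  have hmemB : ∀ a, (𝓜).rel {a} h.last h.last ↔ a ∈ B := by simp [B]
  obtain ⟨a₀, ha₀⟩ := canonicalPsm_exists_rel_self h.last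
  have hB : B.Nonempty := ⟨a₀, (hmemB a₀).mp ha₀⟩
  have hlive : ∀ a, a ∈ (unravel (𝓜)).live h ↔ a ∈ B := fun a =>
    (unravel_mem_live_iff canonicalPsm_isPseudo).trans (hmemB a)
  refine canonicalPsm_subset_of_rel hB hmemB (fun a ha => ?_) ?_
  · rw [← hlive, he.1]
    exact (unravel_mem_live_iff canonicalPsm_isPseudo).mpr ha
  · exact rel_last_of_forall_histRel canonicalPsm_isPseudo hB fun a ha =>
      he.2 a ((hlive a).mpr ha)

theorem last_eq_of_pequiv_unravel {h h' : Hist (𝓜)} (he : pequiv (unravel (𝓜)) h h') :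
    h.last = h'.last :=
  Subtype.ext ((last_subset_of_pequiv_unravel he).antisymm
    (last_subset_of_pequiv_unravel ((pequiv_equivalence unravel_isPE).symm he)))

theorem exists_proper_model_not_sat {φ : Form A AP} (hφ : ¬ Prf Ax φ) :
    ∃ (W : Type) (M : PEData A AP W), M.IsPE ∧ M.Proper ∧ M.NoEmptyWorld ∧ ∃ w, ¬ M.sat w φ := by
  obtain ⟨Γ, hΓ, hφΓ⟩ := exists_maxConsistent_notMem hφ
  have hpe := unravel_isPE (M := 𝓜)
  have hlabel : ∀ h h', pequiv (unravel (𝓜)) h h' →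
      (unravel (𝓜)).label h = (unravel (𝓜)).label h' :=
    fun _ _ he => congrArg (𝓜).label (last_eq_of_pequiv_unravel he)
  refine ⟨_, properify (unravel (𝓜)), properify_isPE hpe, properify_proper hpe,
    properify_noEmptyWorld hpe
      (unravel_noEmptyWorld canonicalPsm_isPseudo canonicalPsm_exists_rel_self),
    Quot.mk _ ⟨⟨Γ, hΓ⟩, [], trivial⟩, ?_⟩
  rwa [properify_sat_iff hpe hlabel, unravel_sat_iff canonicalPsm_isPseudo,
    canonicalPsm_sat_iff]

end Completeness

/-- Completeness of `SC` for partial epistemic models: if `φ` is valid in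
every proper partial epistemic model with no empty world, then `φ` is provable in
`SC`. -/
theorem completeness_SC_PE (A AP : Type) [Fintype A] [Nonempty AP] (φ : Form A AP)
    (hval : ∀ (W : Type) (M : PEData A AP W), M.IsPE → M.Proper → M.NoEmptyWorld →
      ∀ w : W, M.sat w φ) :
    SC φ := by
  by_contra hφ
  obtain ⟨W, M, hpe, hproper, hne, w, hw⟩ := exists_proper_model_not_sat hφ
  exact hw (hval W M hpe hproper hne w)
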